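/- arXiv:2209.01101 — 4 statements merged into one kernel-verified Lean document; each statement's English description precedes it below -/
import Mathlib

section
/- Let k be a field. The representation M = ∏_{i ∈ ℕ} k_{[-i,∞)} of the real line (pointwise product of interval representations) is not isomorphic to any direct sum of interval representations. -/
open scoped Classical DirectSum

universe u v

/-- A persistence module (representation) of a preordered set `T`
over a field `k`: a functor from `T` to `k`-vector spaces. -/
structure PersMod (T : Type u) [Preorder T] (k : Type v) [Field k] where
  V : T → Type v
  [addCommGroup : ∀ t, AddCommGroup (V t)]
  [module : ∀ t, Module k (V t)]
  map : ∀ {s t : T}, s ≤ t → (V s →ₗ[k] V t)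
  map_id : ∀ t : T, map (le_refl t) = LinearMap.id
  map_comp : ∀ {s t u : T} (h₁ : s ≤ t) (h₂ : t ≤ u),
    map (h₁.trans h₂) = (map h₂).comp (map h₁)

attribute [instance] PersMod.addCommGroup PersMod.module

/-- A subset of a preordered set is convex (an interval, in a total order). -/
def IsConvex {T : Type u} [Preorder T] (J : Set T) : Prop :=
  ∀ ⦃a b c : T⦄, a ≤ b → b ≤ c → a ∈ J → c ∈ J → b ∈ J

/-- The interval representation `k_J`: `k` at points of `J`, `0` elsewhere,
identity structure maps within `J`. -/
noncomputable def intervalRep (T : Type u) [Preorder T] (k : Type v) [Field k]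
    (J : Set T) (hJ : IsConvex J) : PersMod T k where
  V t := ↥(if t ∈ J then (⊤ : Submodule k k) else ⊥)
  map {s t} h :=
    { toFun := fun x => ⟨if t ∈ J then (x : k) else 0, by
        split_ifs <;> first | exact Submodule.mem_top | exact Submodule.zero_mem _⟩
      map_add' := fun x y => by
        by_cases ht : t ∈ J <;> ext <;> simp [ht]
      map_smul' := fun c x => by
        by_cases ht : t ∈ J <;> ext <;> simp [ht] }
  map_id t := by
    ext x
    by_cases ht : t ∈ J
    · simp [ht]
    · have hx : (x : k) = 0 := by
        have h2 := x.2; simp only [if_neg ht] at h2; exact (Submodule.mem_bot k).1 h2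
      show (if t ∈ J then (x : k) else 0) = (x : k); rw [if_neg ht, hx]
  map_comp {s t u} h₁ h₂ := by
    ext x
    by_cases hu : u ∈ J
    · by_cases ht : t ∈ J
      · show (if u ∈ J then (x : k) else 0) = (if u ∈ J then (if t ∈ J then (x : k) else 0) else 0)
        simp only [if_pos hu, if_pos ht]
      · by_cases hs : s ∈ J
        · exact absurd (hJ h₁ h₂ hs hu) ht
        · have hx : (x : k) = 0 := by
            have h2 := x.2; simp only [if_neg hs] at h2; exact (Submodule.mem_bot k).1 h2
          simp [hu, ht, hx]
    · simp [hu]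

/-- The space of morphisms of representations `M → N`, as a submodule of
the module of all families of linear maps. -/
def homSubmodule {T : Type u} [Preorder T] (k : Type v) [Field k]
    (M N : PersMod T k) : Submodule k (∀ t, M.V t →ₗ[k] N.V t) where
  carrier := {f | ∀ (s t : T) (h : s ≤ t) (x : M.V s),
    N.map h (f s x) = f t (M.map h x)}
  add_mem' := by
    intro a b ha hb s t h x
    simp [ha s t h x, hb s t h x]
  zero_mem' := by intro s t h x; simp
  smul_mem' := by
    intro c a ha s t h x
    simp [ha s t h x]

/-- An isomorphism of persistence modules. -/
structure PersIso {T : Type u} [Preorder T] {k : Type v} [Field k]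
    (M N : PersMod T k) where
  e : ∀ t, M.V t ≃ₗ[k] N.V t
  natural : ∀ {s t : T} (h : s ≤ t) (x : M.V s),
    e t (M.map h x) = N.map h (e s x)

/-- The pointwise product of a family of persistence modules. -/
def prodRep {T : Type u} [Preorder T] (k : Type v) [Field k]
    (ι : Type v) (F : ι → PersMod T k) : PersMod T k where
  V t := ∀ i, (F i).V t
  map {s t} h := LinearMap.pi fun i => ((F i).map h).comp (LinearMap.proj i)
  map_id t := by
    ext x i
    simp [(F i).map_id]
  map_comp h₁ h₂ := by
    ext x i
    simp [(F i).map_comp h₁ h₂]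

/-- The direct sum of a family of persistence modules. -/
noncomputable def dSum {T : Type u} [Preorder T] (k : Type v) [Field k]
    (ι : Type v) (F : ι → PersMod T k) : PersMod T k where
  V t := ⨁ i, (F i).V t
  map {s t} h :=
    letI := Classical.decEq ι
    DirectSum.toModule k ι _ fun i =>
      (DirectSum.lof k ι (fun j => (F j).V t) i).comp ((F i).map h)
  map_id t := by
    letI := Classical.decEq ι
    refine DirectSum.linearMap_ext _ fun i => ?_
    ext x
    simp [DirectSum.toModule_lof, (F i).map_id]
  map_comp {s t u} h₁ h₂ := by
    letI := Classical.decEq ι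
    refine DirectSum.linearMap_ext _ fun i => ?_
    ext x
    simp [DirectSum.toModule_lof, (F i).map_comp h₁ h₂]

theorem isConvex_Ici {T : Type u} [LinearOrder T] (a : T) : IsConvex (Set.Ici a) :=
  fun _ _ _ h1 _ ha _ => le_trans ha h1

/-!
At time `0` every `k_{[-i,∞)}` is `k`, so `M(0) = k^ℕ` has uncountable dimension, while the
image of `M(-n) → M(0)` is cut out by the first `n` coordinates: it has finite codimension, and
these images intersect in `0`. An isomorphism `M ≅ ⨁ l, k_{J l}` transports both properties. In
the direct sum, the generators of the summands with `0 ∈ J l` and `-n ∉ J l` stay independent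
modulo the image of `M(-n)`, so there are finitely many of them; and a summand with `0 ∈ J l`
cannot contain every `-n`, since its generator would lie in all the images. Hence only countably
many summands are nonzero at `0`, and the direct sum has countable dimension there.
-/

noncomputable section

namespace intervalRep

variable {T : Type u} [Preorder T] {k : Type v} [Field k] {J : Set T} {hJ : IsConvex J}

def val (t : T) : (intervalRep T k J hJ).V t →ₗ[k] k :=
  Submodule.subtype _

theorem val_injective (t : T) : Function.Injective (val (k := k) (hJ := hJ) t) :=
  Subtype.val_injective

theorem val_map {s t : T} (h : s ≤ t) (x : (intervalRep T k J hJ).V s) :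
    val t ((intervalRep T k J hJ).map h x) = if t ∈ J then val s x else 0 := rfl

theorem val_eq_zero {t : T} (ht : t ∉ J) (x : (intervalRep T k J hJ).V t) : val t x = 0 := by
  obtain ⟨c, hc⟩ := x
  simp only [if_neg ht] at hc
  exact (Submodule.mem_bot k).1 hc

def generator {t : T} (ht : t ∈ J) : (intervalRep T k J hJ).V t := ⟨1, by simp [ht]⟩

theorem val_generator {t : T} (ht : t ∈ J) :
    val t (generator ht : (intervalRep T k J hJ).V t) = 1 := rfl

theorem map_generator {s t : T} (h : s ≤ t) (hs : s ∈ J) (ht : t ∈ J) :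
    (intervalRep T k J hJ).map h (generator hs) = generator ht :=
  val_injective t (by rw [val_map, if_pos ht]; rfl)

theorem map_surjective {s t : T} (h : s ≤ t) (hs : s ∈ J) :
    Function.Surjective ((intervalRep T k J hJ).map h) := by
  intro y
  refine ⟨val t y • generator hs, val_injective t ?_⟩
  rw [map_smul, map_smul, val_map]
  split_ifs with ht
  · rw [val_generator, smul_eq_mul, mul_one]
  · rw [smul_zero]
    exact (val_eq_zero ht y).symm

def equivOfMem {t : T} (ht : t ∈ J) : (intervalRep T k J hJ).V t ≃ₗ[k] k :=
  LinearEquiv.ofBijective (val t) ⟨val_injective t, fun c => ⟨c • generator ht, by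
    rw [map_smul, val_generator, smul_eq_mul, mul_one]⟩⟩

theorem rank_le {t : T} :
    Module.rank k ((intervalRep T k J hJ).V t) ≤ Cardinal.mk (ULift.{v} (PLift (t ∈ J))) := by
  by_cases ht : t ∈ J
  · simp only [ht, Cardinal.mk_fintype, Fintype.card_unique, Nat.cast_one]
    exact (Submodule.rank_le _).trans (Module.rank_self k).le
  · have : Subsingleton ((intervalRep T k J hJ).V t) :=
      ⟨fun x y => val_injective t ((val_eq_zero ht x).trans (val_eq_zero ht y).symm)⟩
    simp [rank_subsingleton']

end intervalRep

namespace dSum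
variable {T : Type u} [Preorder T] {k : Type v} [Field k] {ι : Type v} (F : ι → PersMod T k)

def component (t : T) (i : ι) : (dSum k ι F).V t →ₗ[k] (F i).V t :=
  DirectSum.component k ι (fun i => (F i).V t) i

def lof (t : T) (i : ι) : (F i).V t →ₗ[k] (dSum k ι F).V t :=
  letI := Classical.decEq ι
  DirectSum.lof k ι (fun i => (F i).V t) i

theorem map_lof {s t : T} (h : s ≤ t) (i : ι) (x : (F i).V s) :
    (dSum k ι F).map h (lof F s i x) = lof F t i ((F i).map h x) :=
  letI := Classical.decEq ι
  DirectSum.toModule_lof (R := k) (N := (dSum k ι F).V t) _ _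

theorem component_lof_self (t : T) (i : ι) (x : (F i).V t) :
    component F t i (lof F t i x) = x :=
  letI := Classical.decEq ι
  DirectSum.component.lof_self (M := fun i => (F i).V t) k i x

theorem component_lof_of_ne (t : T) {i j : ι} (hij : i ≠ j) (x : (F i).V t) :
    component F t j (lof F t i x) = 0 :=
  letI := Classical.decEq ι
  (DirectSum.component.of (M := fun i => (F i).V t) k j i x).trans (dif_neg hij)

theorem component_map {s t : T} (h : s ≤ t) (z : (dSum k ι F).V s) (i : ι) :
    component F t i ((dSum k ι F).map h z) = (F i).map h (component F s i z) := by
  suffices (component F t i).comp ((dSum k ι F).map h) = ((F i).map h).comp (component F s i) from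
    LinearMap.congr_fun this z
  refine DirectSum.linearMap_ext k fun j => LinearMap.ext fun x => ?_
  change component F t i ((dSum k ι F).map h (lof F s j x)) =
    (F i).map h (component F s i (lof F s j x))
  rw [map_lof]
  by_cases hij : j = i
  · subst hij; rw [component_lof_self, component_lof_self]
  · rw [component_lof_of_ne _ _ hij, component_lof_of_ne _ _ hij, map_zero]

end dSum

theorem PersIso.map_range_map {T : Type u} [Preorder T] {k : Type v} [Field k]
    {M N : PersMod T k} (σ : PersIso M N) {s t : T} (h : s ≤ t) :
    (LinearMap.range (M.map h)).map (σ.e t : M.V t →ₗ[k] N.V t) =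
      LinearMap.range (N.map h) := by
  have hcomm : (σ.e t : M.V t →ₗ[k] N.V t) ∘ₗ M.map h =
      N.map h ∘ₗ (σ.e s : M.V s →ₗ[k] N.V s) :=
    LinearMap.ext (σ.natural h)
  rw [← LinearMap.range_comp, hcomm, LinearMap.range_comp_of_range_eq_top _ (LinearEquiv.range _)]

theorem PersIso.symm_mem_range_map_iff {T : Type u} [Preorder T] {k : Type v} [Field k]
    {M N : PersMod T k} (σ : PersIso M N) {s t : T} (h : s ≤ t) (z : N.V t) :
    (σ.e t).symm z ∈ LinearMap.range (M.map h) ↔ z ∈ LinearMap.range (N.map h) := by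
  rw [← σ.map_range_map h, Submodule.mem_map_equiv]

abbrev intervalSum {T : Type u} [Preorder T] (k : Type v) [Field k] {ι : Type v}
    (J : ι → Set T) (hJ : ∀ i, IsConvex (J i)) : PersMod T k :=
  dSum k ι fun i => intervalRep T k (J i) (hJ i)

namespace intervalSum

open Cardinal

variable {T : Type u} [Preorder T] {k : Type v} [Field k] {ι : Type v}
  {J : ι → Set T} {hJ : ∀ i, IsConvex (J i)}

def coord (t : T) (i : ι) : (intervalSum k J hJ).V t →ₗ[k] k :=
  intervalRep.val t ∘ₗ dSum.component _ t i

def single {t : T} (i : ι) (ht : t ∈ J i) : (intervalSum k J hJ).V t :=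
  dSum.lof _ t i (intervalRep.generator ht)

theorem coord_single {t : T} (i j : ι) (ht : t ∈ J i) :
    coord t j (single i ht : (intervalSum k J hJ).V t) = if i = j then 1 else 0 := by
  by_cases hij : i = j
  · subst hij
    simp [coord, single, dSum.component_lof_self, intervalRep.val_generator]
  · simp [coord, single, dSum.component_lof_of_ne _ _ hij, hij]

theorem coord_map {s t : T} (h : s ≤ t) (z : (intervalSum k J hJ).V s) (i : ι) :
    coord t i ((intervalSum k J hJ).map h z) = if t ∈ J i then coord s i z else 0 := by
  simp only [coord, LinearMap.comp_apply, dSum.component_map, intervalRep.val_map]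

theorem coord_eq_zero_of_mem_range {s t : T} (h : s ≤ t) {i : ι} (hs : s ∉ J i)
    {z : (intervalSum k J hJ).V t} (hz : z ∈ LinearMap.range ((intervalSum k J hJ).map h)) :
    coord t i z = 0 := by
  obtain ⟨y, rfl⟩ := hz
  rw [coord_map]
  split_ifs
  · exact intervalRep.val_eq_zero hs _
  · rfl

theorem single_mem_range {s t : T} (h : s ≤ t) {i : ι} (hs : s ∈ J i) (ht : t ∈ J i) :
    single i ht ∈ LinearMap.range ((intervalSum k J hJ).map h) :=
  ⟨single i hs, by rw [single, dSum.map_lof, intervalRep.map_generator h hs ht]; rfl⟩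

theorem single_ne_zero {t : T} {i : ι} (ht : t ∈ J i) :
    (single i ht : (intervalSum k J hJ).V t) ≠ 0 := fun h0 => by
  simpa [h0] using coord_single (k := k) (hJ := hJ) i i ht

theorem rank_le (t : T) : Module.rank k ((intervalSum k J hJ).V t) ≤ #{i // t ∈ J i} := by
  change Module.rank k (⨁ i, (intervalRep T k (J i) (hJ i)).V t) ≤ _
  rw [rank_directSum, ← mk_congr (Equiv.sigmaULiftPLiftEquivSubtype.{v, v} fun i => t ∈ J i),
    mk_sigma]
  exact sum_le_sum _ _ fun i => intervalRep.rank_le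

theorem finite_of_finite_quotient {s t : T} (h : s ≤ t)
    [Module.Finite k ((intervalSum k J hJ).V t ⧸ LinearMap.range ((intervalSum k J hJ).map h))] :
    {i | t ∈ J i ∧ s ∉ J i}.Finite := by
  set R := LinearMap.range ((intervalSum k J hJ).map h)
  have hli : LinearIndependent k
      (fun i : {i | t ∈ J i ∧ s ∉ J i} => R.mkQ (single i.1 i.2.1)) := by
    rw [linearIndependent_iff']
    intro u g hsum i hi
    have hmem : ∑ j ∈ u, g j • single j.1 j.2.1 ∈ R := by
      rw [← Submodule.Quotient.mk_eq_zero, ← Submodule.mkQ_apply, map_sum]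
      simpa only [map_smul] using hsum
    have hcoord := coord_eq_zero_of_mem_range h i.2.2 hmem
    rwa [map_sum, Finset.sum_eq_single_of_mem i hi, map_smul, coord_single, if_pos rfl,
      smul_eq_mul, mul_one] at hcoord
    intro j _ hji
    rw [map_smul, coord_single, if_neg fun e => hji (Subtype.ext e), smul_zero]
  have := hli.finite_of_isNoetherian
  exact Set.toFinite _

theorem rank_le_aleph0 {t : T} {s : ℕ → T} (hst : ∀ n, s n ≤ t)
    (hfin : ∀ n, Module.Finite k
      ((intervalSum k J hJ).V t ⧸ LinearMap.range ((intervalSum k J hJ).map (hst n))))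
    (hsep : ∀ z, (∀ n, z ∈ LinearMap.range ((intervalSum k J hJ).map (hst n))) → z = 0) :
    Module.rank k ((intervalSum k J hJ).V t) ≤ ℵ₀ := by
  have hcover : {i | t ∈ J i} ⊆ ⋃ n, {i | t ∈ J i ∧ s n ∉ J i} := by
    intro i (ht : t ∈ J i)
    by_contra hnot
    have hs : ∀ n, s n ∈ J i := fun n =>
      by_contra fun hn => hnot (Set.mem_iUnion.2 ⟨n, ht, hn⟩)
    exact single_ne_zero ht (hsep _ fun n => single_mem_range (hst n) (hs n) ht)
  have hcount : {i | t ∈ J i}.Countable :=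
    (Set.countable_iUnion fun n =>
      have := hfin n
      (finite_of_finite_quotient (k := k) (hJ := hJ) (hst n)).countable).mono hcover
  exact (rank_le t).trans (mk_le_aleph0_iff.mpr hcount.to_subtype)

end intervalSum

abbrev intervalProd {T : Type u} [Preorder T] (k : Type v) [Field k] {ι : Type v}
    (J : ι → Set T) (hJ : ∀ i, IsConvex (J i)) : PersMod T k :=
  prodRep k ι fun i => intervalRep T k (J i) (hJ i)

namespace intervalProd

variable {T : Type u} [Preorder T] {k : Type v} [Field k] {ι : Type v}
  {J : ι → Set T} {hJ : ∀ i, IsConvex (J i)}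

def coord (t : T) (i : ι) : (intervalProd k J hJ).V t →ₗ[k] k :=
  intervalRep.val t ∘ₗ LinearMap.proj i

theorem ext {t : T} {x y : (intervalProd k J hJ).V t} (h : ∀ i, coord t i x = coord t i y) :
    x = y :=
  funext fun i => intervalRep.val_injective t (h i)

theorem coord_map {s t : T} (h : s ≤ t) (x : (intervalProd k J hJ).V s) (i : ι) :
    coord t i ((intervalProd k J hJ).map h x) = if t ∈ J i then coord s i x else 0 := rfl

theorem mem_range_map_iff {s t : T} (h : s ≤ t) (x : (intervalProd k J hJ).V t) :
    x ∈ LinearMap.range ((intervalProd k J hJ).map h) ↔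
      ∀ i, s ∉ J i → coord t i x = 0 := by
  constructor
  · rintro ⟨y, rfl⟩ i hs
    rw [coord_map]
    split_ifs
    · exact intervalRep.val_eq_zero hs _
    · rfl
  · intro hx
    have hpre : ∀ i, ∃ y,
        (intervalRep T k (J i) (hJ i)).map h y = LinearMap.proj (R := k) i x := by
      intro i
      by_cases hs : s ∈ J i
      · exact intervalRep.map_surjective h hs _
      · refine ⟨0, intervalRep.val_injective t ?_⟩
        rw [map_zero, map_zero]
        exact (hx i hs).symm
    choose y hy using hpre
    exact ⟨y, funext hy⟩

theorem finite_quotient {s t : T} (h : s ≤ t) (hfin : {i | s ∉ J i}.Finite) :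
    Module.Finite k
      ((intervalProd k J hJ).V t ⧸ LinearMap.range ((intervalProd k J hJ).map h)) := by
  have := hfin.to_subtype
  let π : (intervalProd k J hJ).V t →ₗ[k] ({i | s ∉ J i} → k) :=
    LinearMap.pi fun i => coord t i.1
  have hker : LinearMap.ker π = LinearMap.range ((intervalProd k J hJ).map h) := by
    ext x
    rw [mem_range_map_iff, LinearMap.mem_ker, funext_iff]
    exact ⟨fun hx i hs => hx ⟨i, hs⟩, fun hx i => hx i.1 i.2⟩
  exact Module.Finite.equiv (π.quotKerEquivRange.symm.trans (Submodule.quotEquivOfEq _ _ hker))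

theorem eq_zero_of_forall_mem_range {t : T} {s : ℕ → T} (hst : ∀ n, s n ≤ t)
    (hs : ∀ i, ∃ n, s n ∉ J i) {x : (intervalProd k J hJ).V t}
    (hx : ∀ n, x ∈ LinearMap.range ((intervalProd k J hJ).map (hst n))) : x = 0 :=
  ext fun i =>
    have ⟨n, hn⟩ := hs i
    ((mem_range_map_iff _ x).1 (hx n) i hn).trans (map_zero _).symm

def equivPiOfMem {t : T} (ht : ∀ i, t ∈ J i) : (intervalProd k J hJ).V t ≃ₗ[k] (ι → k) :=
  LinearEquiv.piCongrRight fun i => intervalRep.equivOfMem (ht i)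

end intervalProd

open Cardinal in
theorem aleph0_lt_rank_nat_fun (k : Type v) [Field k] : ℵ₀ < Module.rank k (ℕ → k) := by
  rw [rank_fun_infinite, mk_arrow, mk_nat, lift_aleph0]
  calc ℵ₀ < 2 ^ ℵ₀ := cantor _
    _ ≤ lift #k ^ ℵ₀ :=
      power_le_power_right (by simpa using (two_le_iff (α := k)).2 ⟨0, 1, zero_ne_one⟩)

end

/-- The product `∏_{i ∈ ℕ} k_{[-i,∞)}` of interval representations of the real
line is not isomorphic to any direct sum of interval representations. -/
theorem prod_not_interval_decomposable (k : Type) [Field k] :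
    ¬ ∃ (ι : Type) (J : ι → Set ℝ) (hJ : ∀ i, IsConvex (J i)),
        Nonempty (PersIso
          (prodRep k ℕ (fun i => intervalRep ℝ k (Set.Ici (-(i : ℝ))) (isConvex_Ici _)))
          (dSum k ι (fun i => intervalRep ℝ k (J i) (hJ i)))) := by
  rintro ⟨ι, J, hJ, ⟨σ⟩⟩
  let M := intervalProd k (fun i : ℕ => Set.Ici (-(i : ℝ))) fun _ => isConvex_Ici _
  have hst : ∀ n : ℕ, -(n : ℝ) ≤ 0 := fun n => neg_nonpos.2 n.cast_nonneg
  have hM_fin (n : ℕ) : Module.Finite k (M.V 0 ⧸ LinearMap.range (M.map (hst n))) :=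
    intervalProd.finite_quotient _ ((Set.finite_lt_nat n).subset fun i hi => by
      simpa using hi)
  have hM_sep {x : M.V 0} : (∀ n, x ∈ LinearMap.range (M.map (hst n))) → x = 0 :=
    intervalProd.eq_zero_of_forall_mem_range hst fun i => ⟨i + 1, by simp⟩
  have hD_le : Module.rank k ((intervalSum k J hJ).V 0) ≤ Cardinal.aleph0 :=
    intervalSum.rank_le_aleph0 hst
      (fun n => Module.Finite.equiv (Submodule.Quotient.equiv _ _ (σ.e 0) (σ.map_range_map _)))
      (fun z hz => (σ.e 0).symm.map_eq_zero_iff.1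
        (hM_sep fun n => (σ.symm_mem_range_map_iff _ z).2 (hz n)))
  have hM_gt : Cardinal.aleph0 < Module.rank k (M.V 0) := by
    have h0 (i : ℕ) : (0 : ℝ) ∈ Set.Ici (-(i : ℝ)) := by simp
    rw [(intervalProd.equivPiOfMem (k := k) (hJ := fun _ => isConvex_Ici _) h0).rank_eq]
    exact aleph0_lt_rank_nat_fun k
  exact hM_gt.not_ge ((σ.e 0).rank_eq ▸ hD_le)
end

section
/- Let T be a totally ordered set and endow the set of ideals Idl(T) with the topology in which a subset C is closed if and only if for every nonempty subfamily V ⊆ C, the union ⋃V belongs to C and, whenever ⋂V is nonempty, ⋂V belongs to C. Then this assignment is a genuine topology (the closed sets are stable under arbitrary intersections and finite unions), and it coincides with the order topology on the linearly ordered set Idl(T). -/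
/-!
Ideals of a linear order are totally ordered by inclusion; in `Idl T` the supremum of a nonempty
family is its union and the infimum is its intersection, which exists exactly when the
intersection is nonempty. So it suffices that in any linear order with the order topology a set
is closed iff it contains the suprema and infima of its nonempty subsets.
-/

/-- An ideal of a linearly ordered set: a nonempty downward-closed subset. -/
def IsIdeal {T : Type*} [LinearOrder T] (I : Set T) : Prop :=
  I.Nonempty ∧ ∀ ⦃x y : T⦄, x ≤ y → y ∈ I → x ∈ I

open Set Topology

section OrderTopology

variable {α : Type*} [LinearOrder α] [TopologicalSpace α] [OrderTopology α]

/-- A point of `closure s \ s` is the supremum of the part of `s` below it or the infimum of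
the part above it. -/
theorem isClosed_iff_forall_isLUB_isGLB_mem {s : Set α} :
    IsClosed s ↔ ∀ V ⊆ s, V.Nonempty → (∀ a, IsLUB V a → a ∈ s) ∧ (∀ a, IsGLB V a → a ∈ s) := by
  refine ⟨fun hs V hVs hV => ⟨fun a ha => ?_, fun a ha => ?_⟩, fun H => ?_⟩
  · exact closure_minimal hVs hs (ha.mem_closure hV)
  · exact closure_minimal hVs hs (ha.mem_closure hV)
  refine closure_subset_iff_isClosed.mp fun x hx => by_contra fun hxs => ?_
  have hsplit : s = (s ∩ Iio x) ∪ (s ∩ Ioi x) := by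
    rw [← inter_union_distrib_left, Iio_union_Ioi, eq_comm, inter_eq_left]
    exact fun y hy hyx => hxs (hyx ▸ hy)
  rw [hsplit, closure_union] at hx
  rcases hx with hx | hx
  · exact hxs ((H _ inter_subset_left (closure_nonempty_iff.mp ⟨x, hx⟩)).1 x
      (isLUB_of_mem_closure (fun y hy => hy.2.le) hx))
  · exact hxs ((H _ inter_subset_left (closure_nonempty_iff.mp ⟨x, hx⟩)).2 x
      (isGLB_of_mem_closure (fun y hy => hy.2.le) hx))

end OrderTopology

namespace IsIdeal

variable {T : Type*} [LinearOrder T]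

local notation "Idl" => {I : Set T // IsIdeal I}

theorem total {I J : Set T} (hI : IsIdeal I) (hJ : IsIdeal J) : I ⊆ J ∨ J ⊆ I := by
  refine or_iff_not_imp_left.mpr fun hIJ b hbJ => ?_
  obtain ⟨a, haI, haJ⟩ := not_subset.mp hIJ
  rcases le_total b a with hba | hab
  · exact hI.2 hba haI
  · exact absurd (hJ.2 hab hbJ) haJ

noncomputable abbrev linearOrder : LinearOrder Idl :=
  { (inferInstance : PartialOrder Idl) with
    le_total := fun I J => I.2.total J.2
    toDecidableLE := Classical.decRel _ }

theorem biUnion {V : Set Idl} (hV : V.Nonempty) : IsIdeal (⋃ I ∈ V, (I : Set T)) := by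
  obtain ⟨I, hI⟩ := hV
  obtain ⟨t, ht⟩ := I.2.1
  refine ⟨⟨t, mem_biUnion hI ht⟩, fun x y hxy hy => ?_⟩
  obtain ⟨J, hJ, hyJ⟩ := mem_iUnion₂.mp hy
  exact mem_biUnion hJ (J.2.2 hxy hyJ)

theorem biInter {V : Set Idl} (hne : (⋂ I ∈ V, (I : Set T)).Nonempty) :
    IsIdeal (⋂ I ∈ V, (I : Set T)) :=
  ⟨hne, fun _ _ hxy hy => mem_iInter₂.mpr fun J hJ => J.2.2 hxy (mem_iInter₂.mp hy J hJ)⟩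

theorem isLUB_biUnion {V : Set Idl} (hU : IsIdeal (⋃ I ∈ V, (I : Set T))) :
    IsLUB V ⟨_, hU⟩ :=
  ⟨fun _ hJ => subset_biUnion_of_mem hJ, fun _ hK => iUnion₂_subset fun _ hJ => hK hJ⟩

theorem isGLB_biInter {V : Set Idl} (hM : IsIdeal (⋂ I ∈ V, (I : Set T))) :
    IsGLB V ⟨_, hM⟩ :=
  ⟨fun _ hJ => biInter_subset_of_mem hJ, fun _ hK => subset_iInter₂ fun _ hJ => hK hJ⟩

theorem isLUB_iff_coe_eq_biUnion {V : Set Idl} (hV : V.Nonempty) {A : Idl} :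
    IsLUB V A ↔ (A : Set T) = ⋃ I ∈ V, (I : Set T) := by
  refine ⟨fun hA => congrArg Subtype.val (hA.unique (isLUB_biUnion (biUnion hV))), fun hA => ?_⟩
  obtain ⟨A, hAid⟩ := A
  subst hA
  exact isLUB_biUnion hAid

theorem isGLB_iff_coe_eq_biInter {V : Set Idl} {A : Idl} :
    IsGLB V A ↔ (A : Set T) = ⋂ I ∈ V, (I : Set T) := by
  refine ⟨fun hA => ?_, fun hA => ?_⟩
  · have hM : IsIdeal (⋂ I ∈ V, (I : Set T)) :=
      biInter (A.2.1.mono (subset_iInter₂ fun _ hJ => hA.1 hJ))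
    exact congrArg Subtype.val (hA.unique (isGLB_biInter hM))
  · obtain ⟨A, hAid⟩ := A
    subst hA
    exact isGLB_biInter hAid

end IsIdeal

theorem Subtype.forall_coe_eq_imp_mem_iff {α : Type*} {p : α → Prop} {s : Set (Subtype p)}
    {x : α} : (∀ a : Subtype p, (a : α) = x → a ∈ s) ↔ ∀ h : p x, ⟨x, h⟩ ∈ s := by
  refine ⟨fun h hx => h _ rfl, ?_⟩
  rintro h ⟨a, ha⟩ rfl
  exact h ha

/-- The closed sets of the order topology on `Idl T` are precisely the subsets
stable under arbitrary nonempty element-wise unions and all admissible (i.e.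
nonempty) element-wise intersections.  In particular the latter collection of
sets is the collection of closed sets of a genuine topology, namely the order
topology on the linearly ordered set of ideals. -/
theorem ziegler_closed_iff_order_closed {T : Type*} [LinearOrder T] :
    ∀ s : Set {I : Set T // IsIdeal I},
      @IsClosed _ (Preorder.topology {I : Set T // IsIdeal I}) s ↔
        ∀ V ⊆ s, V.Nonempty →
          (∀ hU : IsIdeal (⋃ I ∈ V, (I : Set T)),
              (⟨⋃ I ∈ V, (I : Set T), hU⟩ : {I : Set T // IsIdeal I}) ∈ s) ∧
          (∀ hM : IsIdeal (⋂ I ∈ V, (I : Set T)),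
              (⟨⋂ I ∈ V, (I : Set T), hM⟩ : {I : Set T // IsIdeal I}) ∈ s) := by
  let := IsIdeal.linearOrder (T := T)
  let : TopologicalSpace {I : Set T // IsIdeal I} := Preorder.topology _
  have : OrderTopology {I : Set T // IsIdeal I} := ⟨rfl⟩
  intro s
  rw [isClosed_iff_forall_isLUB_isGLB_mem]
  refine forall₂_congr fun V _ => forall_congr' fun hV => and_congr ?_ ?_
  · simp only [IsIdeal.isLUB_iff_coe_eq_biUnion hV, Subtype.forall_coe_eq_imp_mem_iff]
  · simp only [IsIdeal.isGLB_iff_coe_eq_biInter, Subtype.forall_coe_eq_imp_mem_iff]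
end

section
/- Let T be a totally ordered set and x ∈ T. In the order topology on the linearly ordered set Idl(T) of ideals of T, the intervals [↓x, ∞) = {I : ↓x ⊆ I} and (-∞, ↓x \ {x}] = {I : I ⊆ {y : y < x}} are both closed and open (clopen). -/
/-- In the order topology on the set of ideals, the intervals
`[↓x, ∞) = {I : ↓x ⊆ I}` and `(-∞, ↓x \ {x}] = {I : I ⊆ {y : y < x}}` are clopen. -/
theorem clopen_intervals_in_idl {T : Type*} [LinearOrder T] (x : T) :
    @IsClopen _ (Preorder.topology {I : Set T // IsIdeal I})
      {I : {I : Set T // IsIdeal I} | Set.Iic x ⊆ (I : Set T)} ∧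
    @IsClopen _ (Preorder.topology {I : Set T // IsIdeal I})
      {I : {I : Set T // IsIdeal I} | (I : Set T) ⊆ Set.Iio x} := by
  set S := {I : Set T // IsIdeal I}
  letI : TopologicalSpace S := Preorder.topology S
  haveI : OrderTopology S := ⟨rfl⟩
  set A : Set S := {I : S | Set.Iic x ⊆ (I : Set T)} with hA
  set B : Set S := {I : S | (I : Set T) ⊆ Set.Iio x} with hB
  -- J is the principal ideal ↓x
  have hJ : IsIdeal (Set.Iic x) := ⟨⟨x, le_refl x⟩, fun a b hab hb => hab.trans hb⟩
  set J : S := ⟨Set.Iic x, hJ⟩ with hJdef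
  -- A = Ici J
  have hAeq : A = Set.Ici J := by
    ext I
    simp only [hA, Set.mem_setOf_eq, Set.mem_Ici]
    rfl
  -- B = Iio J
  have hBeq : B = Set.Iio J := by
    ext I
    simp only [hB, Set.mem_setOf_eq, Set.mem_Iio]
    constructor
    · intro h
      refine lt_of_le_of_ne (fun a ha => (h ha).le) ?_
      intro hIJ
      have : x ∈ (I : Set T) := by
        rw [show (I : Set T) = Set.Iic x from congrArg Subtype.val hIJ]
        exact le_refl x
      exact absurd (h this) (lt_irrefl x)
    · intro h y hy
      by_contra hxy
      simp only [Set.mem_Iio, not_lt] at hxy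
      have hxI : x ∈ (I : Set T) := I.2.2 hxy hy
      have hle : Set.Iic x ⊆ (I : Set T) := fun a ha => I.2.2 (ha.trans hxy) hy
      exact absurd (le_antisymm h.le hle : I = J) h.ne
  -- B = Aᶜ
  have hcompl : B = Aᶜ := by
    ext I
    simp only [hA, hB, Set.mem_setOf_eq, Set.mem_compl_iff]
    constructor
    · intro h hsub
      exact absurd (h (hsub (le_refl x))) (lt_irrefl x)
    · intro h y hy
      by_contra hxy
      simp only [Set.mem_Iio, not_lt] at hxy
      exact h fun a ha => I.2.2 (ha.trans hxy) (I.2.2 (le_refl y) hy)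
  have hBopen : IsOpen B := hBeq ▸ TopologicalSpace.isOpen_generateFrom_of_mem ⟨J, Or.inr rfl⟩
  have hAopen : IsOpen A := by
    by_cases hex : ∃ z, z < x
    · obtain ⟨z, hz⟩ := hex
      have hK : IsIdeal (Set.Iio x) := ⟨⟨z, hz⟩, fun a b hab hb => lt_of_le_of_lt hab hb⟩
      set K : S := ⟨Set.Iio x, hK⟩
      have hAeq' : A = Set.Ioi K := by
        ext I
        simp only [hA, Set.mem_setOf_eq, Set.mem_Ioi]
        constructor
        · intro h
          refine lt_of_le_of_ne (fun a ha => h ha.le) ?_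
          intro hKI
          have : x ∈ (K : Set T) := by
            rw [show (K : Set T) = (I : Set T) from congrArg Subtype.val hKI]
            exact h (le_refl x)
          exact absurd this (lt_irrefl x)
        · intro h a ha
          by_contra haI
          have hxI : x ∉ (I : Set T) := fun hx => haI (I.2.2 ha hx)
          have hsub : (I : Set T) ⊆ Set.Iio x :=
            fun y hy => lt_of_not_ge fun hxy => hxI (I.2.2 hxy hy)
          exact absurd (le_antisymm hsub h.le : I = K) h.ne'
      exact hAeq' ▸ TopologicalSpace.isOpen_generateFrom_of_mem ⟨K, Or.inl rfl⟩
    · have : A = Set.univ := by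
        ext I
        simp only [hA, Set.mem_setOf_eq, Set.mem_univ, iff_true]
        obtain ⟨y, hy⟩ := I.2.1
        have hxy : x ≤ y := le_of_not_gt fun h => hex ⟨y, h⟩
        exact fun a ha => I.2.2 (ha.trans hxy) hy
      rw [this]; exact isOpen_univ
  refine ⟨⟨?_, hAopen⟩, ⟨?_, hBopen⟩⟩
  · rw [← isOpen_compl_iff, ← hcompl]; exact hBopen
  · rw [hcompl]; exact hAopen.isClosed_compl
end

section
/- The order topology on the set Idl(ℝ) of ideals of ℝ is Hausdorff but not compact and not discrete. -/
open Set Filter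

theorem not_isOpen_singleton_of_isPredPrelimit {α : Type*} [LinearOrder α] [TopologicalSpace α]
    [OrderTopology α] {a : α} (ha : Order.IsPredPrelimit a) (ha' : ¬ IsMax a) : ¬ IsOpen {a} := by
  intro hopen
  obtain ⟨u, hau, hsub⟩ := exists_Ico_subset_of_mem_nhds (hopen.mem_nhds rfl) (not_isMax_iff.1 ha')
  obtain ⟨z, haz, hzu⟩ := (not_covBy_iff hau).1 (ha u)
  exact haz.ne' (hsub ⟨haz.le, hzu⟩)

theorem noncompactSpace_of_noMinOrder {α : Type*} [LinearOrder α] [TopologicalSpace α]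
    [OrderTopology α] [Nonempty α] [NoMinOrder α] : NoncompactSpace α :=
  noncompactSpace_of_neBot (atBot_neBot.mono atBot_le_cocompact)

theorem isIdeal_Iic {T : Type*} [LinearOrder T] (a : T) : IsIdeal (Iic a) :=
  ⟨nonempty_Iic, fun _ _ hxy hy => hxy.trans hy⟩

abbrev Idl (T : Type*) [LinearOrder T] := {I : Set T // IsIdeal I}

namespace Idl

variable {T : Type*} [LinearOrder T]

theorem le_of_mem_of_notMem {I J : Idl T} {x : T} (hxJ : x ∈ (J : Set T))
    (hxI : x ∉ (I : Set T)) : I ≤ J := fun y hyI =>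
  J.2.2 ((le_total y x).resolve_right fun hxy => hxI (I.2.2 hxy hyI)) hxJ

theorem lt_of_mem_of_notMem {I J : Idl T} {x : T} (hxJ : x ∈ (J : Set T))
    (hxI : x ∉ (I : Set T)) : I < J :=
  lt_of_le_of_ne (le_of_mem_of_notMem hxJ hxI) fun h => hxI (h ▸ hxJ)

noncomputable instance : LinearOrder (Idl T) where
  le_total I J := by
    refine or_iff_not_imp_left.2 fun h => ?_
    obtain ⟨x, hxI, hxJ⟩ := not_subset.1 h
    exact le_of_mem_of_notMem hxI hxJ
  toDecidableLE := Classical.decRel _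

instance : TopologicalSpace (Idl T) := Preorder.topology _

instance : OrderTopology (Idl T) := ⟨rfl⟩

def iic (a : T) : Idl T := ⟨Iic a, isIdeal_Iic a⟩

theorem iic_strictMono : StrictMono (iic : T → Idl T) := fun _ _ hab =>
  lt_of_mem_of_notMem (mem_Iic.2 le_rfl) hab.not_ge

instance [Nonempty T] : Nonempty (Idl T) := Nonempty.map iic inferInstance

instance [NoMinOrder T] : NoMinOrder (Idl T) where
  exists_lt I := by
    obtain ⟨x, hx⟩ := I.2.1
    obtain ⟨y, hyx⟩ := exists_lt x
    exact ⟨iic y, lt_of_mem_of_notMem hx hyx.not_ge⟩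

theorem isPredPrelimit_iic [DenselyOrdered T] (a : T) : Order.IsPredPrelimit (iic a) := by
  intro J hJ
  obtain ⟨y, hyJ, hya⟩ := not_subset.1 hJ.lt.not_ge
  obtain ⟨z, haz, hzy⟩ := exists_between (not_le.1 hya)
  exact hJ.2 (iic_strictMono haz) (lt_of_mem_of_notMem hyJ hzy.not_ge)

end Idl

/-- The order topology on the set of ideals of `ℝ` is Hausdorff,
not compact and not discrete. -/
theorem idl_real_hausdorff_not_compact_not_discrete :
    @T2Space _ (Preorder.topology {I : Set ℝ // IsIdeal I}) ∧
    ¬ @CompactSpace _ (Preorder.topology {I : Set ℝ // IsIdeal I}) ∧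
    ¬ @DiscreteTopology _ (Preorder.topology {I : Set ℝ // IsIdeal I}) := by
  refine ⟨inferInstanceAs (T2Space (Idl ℝ)), fun h => ?_, fun h => ?_⟩
  · exact not_compactSpace_iff.2 noncompactSpace_of_noMinOrder h
  · exact not_isOpen_singleton_of_isPredPrelimit (Idl.isPredPrelimit_iic (0 : ℝ))
      (Idl.iic_strictMono zero_lt_one).not_isMax (@isOpen_discrete _ _ h _)
end
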